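/- Let ξ be an extremal number (so that ŵ_2(ξ) = (3+√5)/2 and w_2(ξ) = 2+√5). Then ŵ*_3(ξ) ≤ 3(2+√5)/(1+√5). -/

import Mathlib

open Polynomial Filter

/-- Height of an integer polynomial: the maximum absolute value of its coefficients. -/
noncomputable def polyHeight (P : Polynomial ℤ) : ℝ :=
  ((P.support.sup fun i => (P.coeff i).natAbs : ℕ) : ℝ)

/-- `P` and `Q` have no common non-constant factor in `ℤ[X]`. -/
def CoprimePoly (P Q : Polynomial ℤ) : Prop :=
  ∀ d : Polynomial ℤ, d ∣ P → d ∣ Q → d.natDegree = 0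

/-- The exponent `w_n(ξ)`. -/
noncomputable def wExp (n : ℕ) (ξ : ℝ) : EReal :=
  sSup {x : EReal | ∃ w : ℝ, x = (w : EReal) ∧
    {P : Polynomial ℤ | P.natDegree ≤ n ∧ 0 < |Polynomial.aeval ξ P| ∧
      |Polynomial.aeval ξ P| ≤ (polyHeight P) ^ (-w)}.Infinite}

/-- The uniform exponent `ŵ_n(ξ)`. -/
noncomputable def whExp (n : ℕ) (ξ : ℝ) : EReal :=
  sSup {x : EReal | ∃ w : ℝ, x = (w : EReal) ∧
    ∀ᶠ H : ℝ in atTop, ∃ P : Polynomial ℤ, P.natDegree ≤ n ∧ polyHeight P ≤ H ∧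
      0 < |Polynomial.aeval ξ P| ∧ |Polynomial.aeval ξ P| ≤ H ^ (-w)}

/-- The exponent `w*_n(ξ)` of approximation by algebraic numbers of degree at most `n`;
the height of an algebraic number is the height of its irreducible defining polynomial. -/
noncomputable def wStarExp (n : ℕ) (ξ : ℝ) : EReal :=
  sSup {x : EReal | ∃ w : ℝ, x = (w : EReal) ∧
    {α : ℝ | ∃ P : Polynomial ℤ, Irreducible P ∧ Polynomial.aeval α P = 0 ∧
      P.natDegree ≤ n ∧ 0 < |ξ - α| ∧ |ξ - α| ≤ (polyHeight P) ^ (-w - 1)}.Infinite}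

/-- The uniform exponent `ŵ*_n(ξ)`. -/
noncomputable def whStarExp (n : ℕ) (ξ : ℝ) : EReal :=
  sSup {x : EReal | ∃ w : ℝ, x = (w : EReal) ∧
    ∀ᶠ H : ℝ in atTop, ∃ α : ℝ, ∃ P : Polynomial ℤ, Irreducible P ∧
      Polynomial.aeval α P = 0 ∧ P.natDegree ≤ n ∧ polyHeight P ≤ H ∧
      0 < |ξ - α| ∧ |ξ - α| ≤ (polyHeight P)⁻¹ * H ^ (-w)}

/-!
Suppose `ŵ*_3(ξ) > w`. Since `v < w_2(ξ)`, there are integer polynomials `Q` of degree `≤ 2` and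
arbitrarily large height `h` with `|Q(ξ)| ≤ h^(-v)`; at scale `X = h^θ` there is then an algebraic
`α` of degree `≤ 3`, with irreducible polynomial `R`, such that `H(R) ≤ X` and
`H(R) |ξ - α| ≤ X^(-w)`. If `R ∣ Q`, then `R` is a quadratic of height `≪ h` (Gelfond) with
`|R(ξ)| ≪ h^(-θw)`, impossible when `θw > v' > w_2(ξ)`. Otherwise the resultant of `R` and `Q` is
a nonzero integer, which gives `1 ≪ H(Q)^2 H(R)^2 |Q(α)| ≪ h^(2+2θ-v) + h^(3+θ-θw)`, impossible
when `2 + 2θ < v` and `θ(w - 1) > 3`. For `ω = w_2(ξ) ≥ 4` such `θ, v, v'` exist as soon as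
`w > 2ω/(ω - 2)`, and `2ω/(ω - 2) ≤ 3(2 + √5)/(1 + √5)` for `ω = 2 + √5`.
-/

open Topology

theorem polyHeight_eq_supNorm (P : ℤ[X]) :
    polyHeight P = (P.map (Int.castRingHom ℂ)).supNorm := by
  have hcoeff (i : ℕ) : ‖(P.map (Int.castRingHom ℂ)).coeff i‖ = (P.coeff i).natAbs := by
    simp [Nat.cast_natAbs]
  apply le_antisymm
  · refine le_trans ?_ (Nat.floor_le (supNorm_nonneg _))
    refine Nat.cast_le.2 (Finset.sup_le fun i _ => Nat.le_floor ?_)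
    exact hcoeff i ▸ le_supNorm _ i
  · obtain ⟨i, hi⟩ := exists_eq_supNorm (P.map (Int.castRingHom ℂ))
    rw [hi, hcoeff, polyHeight, Nat.cast_le]
    by_cases h : P.coeff i = 0
    · simp [h]
    · exact Finset.le_sup (f := fun j => (P.coeff j).natAbs) (mem_support_iff.2 h)

theorem polyHeight_nonneg (P : ℤ[X]) : 0 ≤ polyHeight P := Nat.cast_nonneg _

theorem abs_coeff_le_polyHeight (P : ℤ[X]) (i : ℕ) : |(P.coeff i : ℝ)| ≤ polyHeight P := by
  simpa [polyHeight_eq_supNorm] using le_supNorm (P.map (Int.castRingHom ℂ)) i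

theorem one_le_polyHeight {P : ℤ[X]} (hP : P ≠ 0) : 1 ≤ polyHeight P := by
  refine le_trans ?_ (abs_coeff_le_polyHeight P P.natDegree)
  exact_mod_cast Int.one_le_abs (leadingCoeff_ne_zero.2 hP)

theorem mahlerMeasure_le_polyHeight {P : ℤ[X]} {n : ℕ} (hP : P.natDegree ≤ n) :
    (P.map (Int.castRingHom ℂ)).mahlerMeasure ≤ √(n + 1) * polyHeight P := by
  rw [polyHeight_eq_supNorm]
  refine (mahlerMeasure_le_sqrt_natDegree_add_one_mul_supNorm _).trans ?_
  gcongr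
  · exact supNorm_nonneg _
  · exact_mod_cast natDegree_map_le.trans hP

theorem finite_setOf_polyHeight_le (n : ℕ) (B : ℝ) :
    {P : ℤ[X] | P.natDegree ≤ n ∧ polyHeight P ≤ B}.Finite := by
  refine (finite_mahlerMeasure_le n (√(n + 1) * B).toNNReal).subset ?_
  rintro P ⟨hn, hB⟩
  refine ⟨hn, (mahlerMeasure_le_polyHeight hn).trans ?_⟩
  exact (mul_le_mul_of_nonneg_left hB (Real.sqrt_nonneg _)).trans (Real.le_coe_toNNReal _)

theorem polyHeight_le_of_dvd {R Q : ℤ[X]} {n : ℕ} (hRQ : R ∣ Q) (hQ0 : Q ≠ 0)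
    (hQ : Q.natDegree ≤ n) : polyHeight R ≤ 2 ^ n * √(n + 1) * polyHeight Q := by
  obtain ⟨L, rfl⟩ := hRQ
  have hR : R.natDegree ≤ n := (natDegree_le_of_dvd (dvd_mul_right R L) hQ0).trans hQ
  set R' := R.map (Int.castRingHom ℂ)
  calc polyHeight R = R'.supNorm := polyHeight_eq_supNorm R
    _ ≤ R'.natDegree.choose (R'.natDegree / 2) * R'.mahlerMeasure :=
        supNorm_le_choose_natDegree_div_two_mul_mahlerMeasure R'
    _ ≤ 2 ^ n * (R'.mahlerMeasure * (L.map (Int.castRingHom ℂ)).mahlerMeasure) := by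
        gcongr
        · exact mahlerMeasure_nonneg _
        · exact_mod_cast (Nat.choose_le_two_pow _ _).trans
            (Nat.pow_le_pow_right two_pos (natDegree_map_le.trans hR))
        · exact le_mul_of_one_le_right (mahlerMeasure_nonneg _)
            (one_le_mahlerMeasure_of_ne_zero (right_ne_zero_of_mul hQ0))
    _ ≤ 2 ^ n * (√(n + 1) * polyHeight (R * L)) := by
        rw [← mahlerMeasure_mul, ← Polynomial.map_mul]
        gcongr
        exact mahlerMeasure_le_polyHeight hQ
    _ = 2 ^ n * √(n + 1) * polyHeight (R * L) := by ring

theorem Polynomial.norm_eval_le_supNorm {K : Type*} [NormedField K] (p : K[X]) (z : K) :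
    ‖p.eval z‖ ≤ (p.natDegree + 1) * p.supNorm * max 1 ‖z‖ ^ p.natDegree := by
  rw [eval_eq_sum_range]
  refine (norm_sum_le _ _).trans ((Finset.sum_le_card_nsmul _ _
    (p.supNorm * max 1 ‖z‖ ^ p.natDegree) fun i hi => ?_).trans ?_)
  · rw [norm_mul, norm_pow]
    refine mul_le_mul (le_supNorm p i) ?_ (by positivity) (supNorm_nonneg p)
    exact (pow_le_pow_left₀ (norm_nonneg z) (le_max_right 1 _) i).trans
      (pow_le_pow_right₀ (le_max_left _ _) (Finset.mem_range_succ_iff.1 hi))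
  · simp [mul_assoc]

theorem abs_aeval_sub_aeval_le {P : ℤ[X]} {n : ℕ} (hP : P.natDegree ≤ n) {x y : ℝ}
    (hxy : |x - y| ≤ 1) :
    |aeval x P - aeval y P| ≤ (n + 1) * n * (|x| + 1) ^ n * polyHeight P * |x - y| := by
  have hy : |y| ≤ |x| + 1 := by
    linarith [abs_sub_abs_le_abs_sub y x, abs_sub_comm x y]
  rw [aeval_eq_sum_range' (Nat.lt_succ_of_le hP), aeval_eq_sum_range' (Nat.lt_succ_of_le hP),
    ← Finset.sum_sub_distrib]
  refine (Finset.abs_sum_le_sum_abs _ _).trans ((Finset.sum_le_card_nsmul _ _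
    (polyHeight P * (|x - y| * n * (|x| + 1) ^ n)) fun i hi => ?_).trans ?_)
  · have hi : i ≤ n := Finset.mem_range_succ_iff.1 hi
    rw [zsmul_eq_mul, zsmul_eq_mul, ← mul_sub, abs_mul]
    refine mul_le_mul (abs_coeff_le_polyHeight P i) ?_ (abs_nonneg _)
      ((abs_nonneg _).trans (abs_coeff_le_polyHeight P i))
    have hK : 1 ≤ |x| + 1 := le_add_of_nonneg_left (abs_nonneg x)
    calc |x ^ i - y ^ i| ≤ |x - y| * i * max |x| |y| ^ (i - 1) := abs_pow_sub_pow_le _ _ _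
      _ ≤ |x - y| * n * (|x| + 1) ^ n := by
        gcongr
        exact (pow_le_pow_left₀ (le_max_of_le_left (abs_nonneg x))
          (max_le (le_add_of_nonneg_right zero_le_one) hy) _).trans
          (pow_le_pow_right₀ hK (by omega))
  · rw [Finset.card_range, nsmul_eq_mul, Nat.cast_succ]
    exact le_of_eq (by ring)

theorem Irreducible.dvd_or_isCoprime_map_rat {P : ℤ[X]} (hP : Irreducible P)
    (hdeg : P.natDegree ≠ 0) (Q : ℤ[X]) :
    P ∣ Q ∨ IsCoprime (P.map (Int.castRingHom ℚ)) (Q.map (Int.castRingHom ℚ)) := by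
  have hprim := hP.isPrimitive hdeg
  rw [IsPrimitive.Int.dvd_iff_map_cast_dvd_map_cast P Q hprim,
    ((IsPrimitive.Int.irreducible_iff_irreducible_map_cast hprim).1 hP).coprime_iff_not_dvd]
  exact em _

theorem one_le_norm_aeval_mul_mahlerMeasure {P Q : ℤ[X]} (hP0 : P ≠ 0)
    (hcop : IsCoprime (P.map (Int.castRingHom ℚ)) (Q.map (Int.castRingHom ℚ)))
    {α : ℂ} (hα : aeval α P = 0) :
    1 ≤ ‖aeval α Q‖ * ((Q.natDegree + 1) * polyHeight Q) ^ (P.natDegree - 1) *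
      (P.map (Int.castRingHom ℂ)).mahlerMeasure ^ Q.natDegree := by
  set f := P.map (Int.castRingHom ℂ)
  set g := Q.map (Int.castRingHom ℂ)
  set m := Q.natDegree
  have hfdeg : f.natDegree = P.natDegree :=
    natDegree_map_eq_of_injective (RingHom.injective_int _) P
  have hgdeg : g.natDegree = m := natDegree_map_eq_of_injective (RingHom.injective_int _) Q
  have hf0 : f ≠ 0 := (Polynomial.map_ne_zero_iff (RingHom.injective_int _)).2 hP0
  have heval (R : ℤ[X]) (z : ℂ) : (R.map (Int.castRingHom ℂ)).eval z = aeval z R := by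
    rw [eval_map, aeval_def, algebraMap_int_eq]
  -- `Res(P, Q) = lc(P)^(deg Q) ∏ Q(γ)`, over the roots `γ` of `P`, is a nonzero integer, and the
  -- factors with `γ ≠ α` are bounded by `(deg Q + 1) H(Q) max(1, |γ|)^(deg Q)`.
  have hres0 : P.resultant Q ≠ 0 := by
    have := resultant_ne_zero _ _ hcop
    rw [natDegree_map_eq_of_injective (RingHom.injective_int _),
      natDegree_map_eq_of_injective (RingHom.injective_int _), resultant_map_map, eq_intCast,
      Int.cast_ne_zero] at this
    exact this
  have hres : ((P.resultant Q : ℤ) : ℂ) = f.leadingCoeff ^ m * (f.roots.map g.eval).prod := by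
    rw [← resultant_eq_prod_eval f g m hgdeg.le (IsAlgClosed.splits f), hfdeg, resultant_map_map,
      eq_intCast]
  obtain ⟨s, hs⟩ := Multiset.exists_cons_of_mem ((mem_roots hf0).2 ((heval P α).trans hα))
  have hcard : s.card = P.natDegree - 1 := by
    have := (IsAlgClosed.splits f).natDegree_eq_card_roots
    rw [hs, Multiset.card_cons, hfdeg] at this
    omega
  have hbound (γ : ℂ) : ‖g.eval γ‖ ≤ (m + 1) * polyHeight Q * max 1 ‖γ‖ ^ m := by
    rw [polyHeight_eq_supNorm, ← hgdeg]
    exact norm_eval_le_supNorm g γ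
  have hnorm : ‖(s.map g.eval).prod‖ = (s.map fun γ => ‖g.eval γ‖).prod := by
    simpa [Multiset.map_map] using map_multiset_prod (normHom : ℂ →*₀ ℝ) (s.map g.eval)
  have hone : 1 ≤ (s.map fun γ => max 1 ‖γ‖).prod :=
    Multiset.one_le_prod fun _ h => by
      obtain ⟨γ, -, rfl⟩ := Multiset.mem_map.1 h
      exact le_max_left _ _
  have hM : ‖f.leadingCoeff‖ * (s.map fun γ => max 1 ‖γ‖).prod ≤ f.mahlerMeasure := by
    rw [mahlerMeasure_eq_leadingCoeff_mul_prod_roots, hs, Multiset.map_cons, Multiset.prod_cons]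
    gcongr
    exact le_mul_of_one_le_left (zero_le_one.trans hone) (le_max_left _ _)
  calc (1 : ℝ) ≤ ‖((P.resultant Q : ℤ) : ℂ)‖ := by
        rw [Complex.norm_intCast]; exact_mod_cast Int.one_le_abs hres0
    _ = ‖g.eval α‖ * (‖f.leadingCoeff‖ ^ m * (s.map fun γ => ‖g.eval γ‖).prod) := by
        rw [hres, hs, Multiset.map_cons, Multiset.prod_cons, norm_mul, norm_mul, norm_pow, hnorm]
        ring
    _ ≤ ‖g.eval α‖ * (‖f.leadingCoeff‖ ^ m *
          (s.map fun γ => (m + 1) * polyHeight Q * max 1 ‖γ‖ ^ m).prod) := by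
        gcongr
        exact Multiset.prod_map_le_prod_map₀ _ _ (fun _ _ => norm_nonneg _) fun γ _ => hbound γ
    _ = ‖g.eval α‖ * ((m + 1) * polyHeight Q) ^ s.card *
          (‖f.leadingCoeff‖ * (s.map fun γ => max 1 ‖γ‖).prod) ^ m := by
        rw [Multiset.prod_map_mul, Multiset.map_const', Multiset.prod_replicate,
          Multiset.prod_map_pow]
        ring
    _ ≤ _ := by
        have := polyHeight_nonneg Q
        rw [hcard, heval]
        gcongr

theorem one_le_abs_aeval_mul_polyHeight {P Q : ℤ[X]} {m n : ℕ} (hP0 : P ≠ 0)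
    (hPn : P.natDegree ≤ n) (hQm : Q.natDegree ≤ m)
    (hcop : IsCoprime (P.map (Int.castRingHom ℚ)) (Q.map (Int.castRingHom ℚ)))
    {α : ℝ} (hα : aeval α P = 0) :
    1 ≤ |aeval α Q| * ((m + 1) * polyHeight Q) ^ (n - 1) * (√(n + 1) * polyHeight P) ^ m := by
  have hC (R : ℤ[X]) : aeval (α : ℂ) R = (aeval α R : ℂ) := aeval_algebraMap_apply ℂ α R
  have key := one_le_norm_aeval_mul_mahlerMeasure hP0 hcop (α := α)
    (by rw [hC, hα, Complex.ofReal_zero])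
  have hQ0 : Q ≠ 0 := by rintro rfl; norm_num at key
  rw [hC, Complex.norm_real, Real.norm_eq_abs] at key
  have hQ1 : 1 ≤ (Q.natDegree + 1) * polyHeight Q :=
    one_le_mul_of_one_le_of_one_le (le_add_of_nonneg_left (Nat.cast_nonneg _))
      (one_le_polyHeight hQ0)
  have hdQ : ((Q.natDegree + 1) * polyHeight Q) ^ (P.natDegree - 1) ≤
      ((m + 1) * polyHeight Q) ^ (n - 1) :=
    (pow_le_pow_right₀ hQ1 (Nat.sub_le_sub_right hPn 1)).trans
      (pow_le_pow_left₀ (zero_le_one.trans hQ1) (mul_le_mul_of_nonneg_right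
        (by exact_mod_cast Nat.succ_le_succ hQm) (polyHeight_nonneg Q)) _)
  have hdP : (P.map (Int.castRingHom ℂ)).mahlerMeasure ^ Q.natDegree ≤
      (√(n + 1) * polyHeight P) ^ m :=
    (pow_le_pow_right₀ (one_le_mahlerMeasure_of_ne_zero hP0) hQm).trans
      (pow_le_pow_left₀ (mahlerMeasure_nonneg _) (mahlerMeasure_le_polyHeight hPn) m)
  exact key.trans (mul_le_mul (mul_le_mul_of_nonneg_left hdQ (abs_nonneg _)) hdP
    (pow_nonneg (mahlerMeasure_nonneg _) _)
    (mul_nonneg (abs_nonneg _) ((pow_nonneg (zero_le_one.trans hQ1) _).trans hdQ)))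

theorem Set.Infinite.exists_lt_polyHeight {S : Set ℤ[X]} (hS : S.Infinite) {n : ℕ}
    (hn : ∀ P ∈ S, P.natDegree ≤ n) (B : ℝ) : ∃ P ∈ S, B < polyHeight P := by
  obtain ⟨P, hPS, hPB⟩ := hS.exists_notMem_finite (finite_setOf_polyHeight_le n B)
  exact ⟨P, hPS, lt_of_not_ge fun h => hPB ⟨hn P hPS, h⟩⟩

section Exponents

variable {n : ℕ} {ξ v : ℝ}

theorem infinite_of_lt_wExp (h : (v : EReal) < wExp n ξ) :
    {P : ℤ[X] | P.natDegree ≤ n ∧ 0 < |aeval ξ P| ∧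
      |aeval ξ P| ≤ polyHeight P ^ (-v)}.Infinite := by
  obtain ⟨_, ⟨w, rfl, hw⟩, hvw⟩ := lt_sSup_iff.1 h
  refine hw.mono ?_
  rintro P ⟨hn, hpos, hle⟩
  refine ⟨hn, hpos, hle.trans ?_⟩
  have hP0 : P ≠ 0 := by rintro rfl; simp at hpos
  exact Real.rpow_le_rpow_of_exponent_le (one_le_polyHeight hP0)
    (neg_le_neg (EReal.coe_lt_coe_iff.1 hvw).le)

theorem finite_of_wExp_lt (h : wExp n ξ < v) :
    {P : ℤ[X] | P.natDegree ≤ n ∧ 0 < |aeval ξ P| ∧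
      |aeval ξ P| ≤ polyHeight P ^ (-v)}.Finite := by
  by_contra hinf
  exact (le_sSup (α := EReal) ⟨v, rfl, hinf⟩ : (v : EReal) ≤ wExp n ξ).not_gt h

theorem exists_pos_mul_rpow_le_abs_aeval (hξ : Transcendental ℚ ξ) (h : wExp n ξ < v) :
    ∃ c > 0, ∀ R : ℤ[X], R ≠ 0 → R.natDegree ≤ n →
      c * polyHeight R ^ (-v) ≤ |aeval ξ R| := by
  have hpos {R : ℤ[X]} (hR : R ≠ 0) : 0 < |aeval ξ R| :=
    abs_pos.2 fun h0 => hR (transcendental_iff.1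
      (hξ.restrictScalars (algebraMap ℤ ℚ).injective_int) R h0)
  have hmul {R : ℤ[X]} (hR : R ≠ 0) :
      polyHeight R ^ v * polyHeight R ^ (-v) = 1 := by
    rw [← Real.rpow_add (zero_lt_one.trans_le (one_le_polyHeight hR)), add_neg_cancel,
      Real.rpow_zero]
  -- the finitely many exceptions to `|R ξ| > H(R)^(-v)` are absorbed into the constant `c`
  obtain ⟨c, ⟨hcS, hc1⟩, hc0⟩ : ∃ c : ℝ, ((∀ R ∈ {P : ℤ[X] | P.natDegree ≤ n ∧
      0 < |aeval ξ P| ∧ |aeval ξ P| ≤ polyHeight P ^ (-v)},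
      c ≤ |aeval ξ R| * polyHeight R ^ v) ∧ c ≤ 1) ∧ 0 < c := by
    refine (((finite_of_wExp_lt h).eventually_all.2 fun R hR => ?_).and ?_).and
      self_mem_nhdsWithin |>.exists (f := 𝓝[>] (0 : ℝ))
    · have hR0 : R ≠ 0 := by rintro rfl; simp at hR
      exact nhdsWithin_le_nhds (eventually_le_nhds (mul_pos (hpos hR0)
        (Real.rpow_pos_of_pos (zero_lt_one.trans_le (one_le_polyHeight hR0)) v)))
    · exact nhdsWithin_le_nhds (eventually_le_nhds one_pos)
  refine ⟨c, hc0, fun R hR0 hRn => ?_⟩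
  have hH : 0 ≤ polyHeight R ^ (-v) := Real.rpow_nonneg (polyHeight_nonneg R) _
  by_cases hR : |aeval ξ R| ≤ polyHeight R ^ (-v)
  · calc c * polyHeight R ^ (-v) ≤ |aeval ξ R| * polyHeight R ^ v * polyHeight R ^ (-v) :=
          mul_le_mul_of_nonneg_right (hcS R ⟨hRn, hpos hR0, hR⟩) hH
      _ = |aeval ξ R| := by rw [mul_assoc, hmul hR0, mul_one]
  · calc c * polyHeight R ^ (-v) ≤ 1 * polyHeight R ^ (-v) := mul_le_mul_of_nonneg_right hc1 hH
      _ ≤ |aeval ξ R| := by rw [one_mul]; exact (not_le.1 hR).le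

end Exponents

section GapPrinciple

variable {ξ α : ℝ} {Q R : ℤ[X]}

theorem one_le_polyHeight_sq_mul_of_isCoprime (hQ : Q.natDegree ≤ 2) (hR0 : R ≠ 0)
    (hR : R.natDegree ≤ 3)
    (hcop : IsCoprime (R.map (Int.castRingHom ℚ)) (Q.map (Int.castRingHom ℚ)))
    (hα : aeval α R = 0) (hξα : |ξ - α| ≤ 1) :
    1 ≤ 36 * polyHeight Q ^ 2 * polyHeight R ^ 2 *
      (|aeval ξ Q| + 6 * (|ξ| + 1) ^ 2 * polyHeight Q * |ξ - α|) := by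
  have hLip := abs_aeval_sub_aeval_le hQ hξα
  have hLiou := one_le_abs_aeval_mul_polyHeight hR0 hR hQ hcop hα
  norm_num at hLip hLiou
  have hQα : |aeval α Q| ≤ |aeval ξ Q| + 6 * (|ξ| + 1) ^ 2 * polyHeight Q * |ξ - α| := by
    linarith [abs_sub_abs_le_abs_sub (aeval α Q) (aeval ξ Q),
      abs_sub_comm (aeval α Q) (aeval ξ Q)]
  calc (1 : ℝ) ≤ |aeval α Q| * (3 * polyHeight Q) ^ 2 * (2 * polyHeight R) ^ 2 := hLiou
    _ = 36 * polyHeight Q ^ 2 * polyHeight R ^ 2 * |aeval α Q| := by ring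
    _ ≤ _ := by
      have := polyHeight_nonneg Q
      have := polyHeight_nonneg R
      gcongr

theorem mul_rpow_le_polyHeight_mul_of_dvd {c v : ℝ} (hc0 : 0 ≤ c) (hv : 0 ≤ v)
    (hc : ∀ P : ℤ[X], P ≠ 0 → P.natDegree ≤ 2 → c * polyHeight P ^ (-v) ≤ |aeval ξ P|)
    (hQ0 : Q ≠ 0) (hQ : Q.natDegree ≤ 2) (hRQ : R ∣ Q) (hα : aeval α R = 0)
    (hξα : |ξ - α| ≤ 1) :
    c * (4 * √3 * polyHeight Q) ^ (-v) ≤ 6 * (|ξ| + 1) ^ 2 * polyHeight R * |ξ - α| := by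
  have hR0 : R ≠ 0 := by rintro rfl; exact hQ0 (zero_dvd_iff.1 hRQ)
  have hR : R.natDegree ≤ 2 := (natDegree_le_of_dvd hRQ hQ0).trans hQ
  have hheight : polyHeight R ≤ 4 * √3 * polyHeight Q := by
    have := polyHeight_le_of_dvd hRQ hQ0 hQ
    norm_num at this
    exact this
  have hLip := abs_aeval_sub_aeval_le hR hξα
  norm_num [hα] at hLip
  calc c * (4 * √3 * polyHeight Q) ^ (-v) ≤ c * polyHeight R ^ (-v) :=
        mul_le_mul_of_nonneg_left (Real.rpow_le_rpow_of_nonpos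
          (zero_lt_one.trans_le (one_le_polyHeight hR0)) hheight (neg_nonpos.2 hv)) hc0
    _ ≤ |aeval ξ R| := hc R hR0 hR
    _ ≤ _ := hLip

theorem approx_dichotomy {v v' θ w c : ℝ} (hc0 : 0 ≤ c) (hv' : 0 ≤ v') (hθ : 0 ≤ θ)
    (hw : 0 ≤ w)
    (hc : ∀ P : ℤ[X], P ≠ 0 → P.natDegree ≤ 2 → c * polyHeight P ^ (-v') ≤ |aeval ξ P|)
    (hQ0 : Q ≠ 0) (hQ : Q.natDegree ≤ 2) (hQξ : |aeval ξ Q| ≤ polyHeight Q ^ (-v))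
    (hR : Irreducible R) (hR3 : R.natDegree ≤ 3) (hα : aeval α R = 0)
    (hRX : polyHeight R ≤ polyHeight Q ^ θ)
    (hξα : |ξ - α| ≤ (polyHeight R)⁻¹ * (polyHeight Q ^ θ) ^ (-w)) :
    c * (4 * √3) ^ (-v') * polyHeight Q ^ (-v') ≤
        6 * (|ξ| + 1) ^ 2 * polyHeight Q ^ (-(θ * w)) ∨
      1 ≤ 36 * polyHeight Q ^ (2 + 2 * θ - v) +
        36 * (6 * (|ξ| + 1) ^ 2) * polyHeight Q ^ (3 + θ - θ * w) := by
  set h := polyHeight Q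
  set r := polyHeight R
  have hh : 1 ≤ h := one_le_polyHeight hQ0
  have hh0 : 0 < h := zero_lt_one.trans_le hh
  have hR0 := hR.ne_zero
  have hr : 1 ≤ r := one_le_polyHeight hR0
  have hpow (a b : ℝ) : h ^ a * h ^ b = h ^ (a + b) := (Real.rpow_add hh0 a b).symm
  have hXw : (h ^ θ) ^ (-w) = h ^ (-(θ * w)) := by rw [← Real.rpow_mul hh0.le]; ring_nf
  have hX1 : 1 ≤ h ^ θ := Real.one_le_rpow hh hθ
  have hRξα : r * |ξ - α| ≤ h ^ (-(θ * w)) := by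
    rw [← hXw]
    exact (le_inv_mul_iff₀ (zero_lt_one.trans_le hr)).1 hξα
  have hξα1 : |ξ - α| ≤ 1 := hξα.trans (mul_le_one₀ (inv_le_one_of_one_le₀ hr)
    (Real.rpow_nonneg (zero_le_one.trans hX1) _)
    (Real.rpow_le_one_of_one_le_of_nonpos hX1 (neg_nonpos.2 hw)))
  have hRdeg : R.natDegree ≠ 0 :=
    (natDegree_pos_of_aeval_root hR0 hα fun x hx => by simpa using hx).ne'
  rcases hR.dvd_or_isCoprime_map_rat hRdeg Q with hRQ | hcop
  · left
    have key := mul_rpow_le_polyHeight_mul_of_dvd hc0 hv' hc hQ0 hQ hRQ hα hξα1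
    rw [Real.mul_rpow (by positivity) hh0.le, ← mul_assoc, mul_assoc (6 * _)] at key
    exact key.trans (mul_le_mul_of_nonneg_left hRξα (by positivity))
  · right
    have key := one_le_polyHeight_sq_mul_of_isCoprime hQ hR0 hR3 hcop hα hξα1
    have t₁ : h ^ 2 * r ^ 2 * |aeval ξ Q| ≤ h ^ (2 + 2 * θ - v) := by
      calc h ^ 2 * r ^ 2 * |aeval ξ Q| ≤ h ^ 2 * (h ^ θ) ^ 2 * h ^ (-v) := by gcongr
        _ = h ^ (2 + 2 * θ - v) := by
          rw [← Real.rpow_natCast, ← Real.rpow_natCast (h ^ θ), ← Real.rpow_mul hh0.le, hpow,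
            hpow]
          norm_num
          ring_nf
    have t₂ : h ^ 2 * r ^ 2 * (h * |ξ - α|) ≤ h ^ (3 + θ - θ * w) := by
      calc h ^ 2 * r ^ 2 * (h * |ξ - α|) = h ^ 3 * r * (r * |ξ - α|) := by ring
        _ ≤ h ^ 3 * h ^ θ * h ^ (-(θ * w)) := by gcongr
        _ = h ^ (3 + θ - θ * w) := by
          rw [← Real.rpow_natCast, hpow, hpow]
          norm_num
          ring_nf
    have := mul_le_mul_of_nonneg_left t₂ (by positivity : (0 : ℝ) ≤ 36 * (6 * (|ξ| + 1) ^ 2))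
    nlinarith

end GapPrinciple

theorem eventually_mul_rpow_lt {a : ℝ} (ha : a < 0) (A : ℝ) {B : ℝ} (hB : 0 < B) :
    ∀ᶠ h : ℝ in atTop, A * h ^ a < B := by
  have := (tendsto_rpow_neg_atTop (neg_pos.2 ha)).const_mul A
  rw [neg_neg, mul_zero] at this
  exact this.eventually_lt_const hB

theorem not_eventually_approx {ξ v v' θ w : ℝ} (hξ : Transcendental ℚ ξ)
    (hv : (v : EReal) < wExp 2 ξ) (hv' : wExp 2 ξ < v') (hθ : 0 < θ)
    (hθv : 2 + 2 * θ < v) (hθv' : v' < θ * w) (hθw : 3 < θ * (w - 1)) :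
    ¬ ∀ᶠ H : ℝ in atTop, ∃ α : ℝ, ∃ P : ℤ[X], Irreducible P ∧ aeval α P = 0 ∧
      P.natDegree ≤ 3 ∧ polyHeight P ≤ H ∧ 0 < |ξ - α| ∧
      |ξ - α| ≤ (polyHeight P)⁻¹ * H ^ (-w) := by
  intro happrox
  have hvv' : v < v' := EReal.coe_lt_coe_iff.1 (hv.trans hv')
  obtain ⟨c, hc0, hc⟩ := exists_pos_mul_rpow_le_abs_aeval hξ hv'
  set L := 6 * (|ξ| + 1) ^ 2
  set c' := c * (4 * √3) ^ (-v')
  obtain ⟨B, hB⟩ := eventually_atTop.1 <|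
    ((tendsto_rpow_atTop hθ).eventually happrox).and <|
    (eventually_mul_rpow_lt (a := v' - θ * w) (by linarith) L (B := c') (by positivity)).and <|
    (eventually_mul_rpow_lt (a := 2 + 2 * θ - v) (by linarith) 36 one_half_pos).and
    (eventually_mul_rpow_lt (a := 3 + θ - θ * w) (by linarith) (36 * L) one_half_pos)
  obtain ⟨Q, ⟨hQ, hQpos, hQξ⟩, hBQ⟩ :=
    (infinite_of_lt_wExp hv).exists_lt_polyHeight (fun P hP => hP.1) B
  obtain ⟨⟨α, R, hR, hα, hR3, hRX, -, hξα⟩, hdvd, hcop₁, hcop₂⟩ := hB _ hBQ.le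
  have hQ0 : Q ≠ 0 := by rintro rfl; simp at hQpos
  rcases approx_dichotomy hc0.le (by linarith) hθ.le (by nlinarith) hc hQ0 hQ hQξ hR hR3 hα
    hRX hξα with key | key
  · have hh0 := zero_lt_one.trans_le (one_le_polyHeight hQ0)
    have := mul_lt_mul_of_pos_right hdvd (Real.rpow_pos_of_pos hh0 (-v'))
    rw [mul_assoc, ← Real.rpow_add hh0, show v' - θ * w + -v' = -(θ * w) by ring] at this
    linarith
  · linarith

theorem whStarExp_three_le_of_wExp_two_eq {ξ ω : ℝ} (hξ : Transcendental ℚ ξ) (hω : wExp 2 ξ = ω)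
    (hω4 : 4 ≤ ω) : whStarExp 3 ξ ≤ ((2 * ω / (ω - 2) : ℝ) : EReal) := by
  refine sSup_le ?_
  rintro _ ⟨w, rfl, happrox⟩
  rw [EReal.coe_le_coe_iff]
  by_contra! hw
  have hw' : 2 * ω < w * (ω - 2) := (div_lt_iff₀ (by linarith)).1 hw
  have hw0 : 0 < w := by nlinarith
  have hw1 : 0 < w - 1 := by nlinarith
  obtain ⟨θ, hθ₁, hθ₂⟩ : ∃ θ, max (ω / w) (3 / (w - 1)) < θ ∧ θ < (ω - 2) / 2 := by
    refine exists_between (max_lt ?_ ?_)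
    · rw [div_lt_iff₀ hw0]; linarith
    · rw [div_lt_iff₀ hw1]; nlinarith
  have hθ0 : 0 < θ := (div_pos (by linarith) hw0).trans ((le_max_left _ _).trans_lt hθ₁)
  obtain ⟨v', hωv', hv'⟩ :=
    exists_between ((div_lt_iff₀ hw0).1 ((le_max_left _ _).trans_lt hθ₁))
  obtain ⟨v, hv, hvω⟩ := exists_between (show 2 + 2 * θ < ω by linarith)
  refine not_eventually_approx hξ (hω ▸ EReal.coe_lt_coe hvω) (hω ▸ EReal.coe_lt_coe hωv') hθ0
    hv hv' ?_ happrox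
  rw [← div_lt_iff₀ hw1]
  exact (le_max_right _ _).trans_lt hθ₁

theorem stmt12_general (ξ : ℝ) (hξ : Transcendental ℚ ξ)
    (hext2 : wExp 2 ξ = ((2 + Real.sqrt 5 : ℝ) : EReal)) :
    whStarExp 3 ξ ≤ ((3 * (2 + Real.sqrt 5) / (1 + Real.sqrt 5) : ℝ) : EReal) := by
  have h5 : 2 ≤ √5 := Real.le_sqrt_of_sq_le (by norm_num)
  refine (whStarExp_three_le_of_wExp_two_eq hξ hext2 (by linarith)).trans
    (EReal.coe_le_coe_iff.2 ?_)
  rw [div_le_div_iff₀ (by linarith) (by positivity)]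
  nlinarith [Real.sq_sqrt (show (0 : ℝ) ≤ 5 by norm_num)]

theorem stmt12 (ξ : ℝ) (hξ : Transcendental ℚ ξ)
    (hext1 : whExp 2 ξ = (((3 + Real.sqrt 5) / 2 : ℝ) : EReal))
    (hext2 : wExp 2 ξ = ((2 + Real.sqrt 5 : ℝ) : EReal)) :
    whStarExp 3 ξ ≤ ((3 * (2 + Real.sqrt 5) / (1 + Real.sqrt 5) : ℝ) : EReal) :=
  stmt12_general ξ hξ hext2
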